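/- arXiv:2007.02792 — 7 statements merged into one kernel-verified Lean document; each statement's English description precedes it below -/
import Mathlib

section
/- Let X be a Banach space, G a group, and θ : G → ℤ a surjective group homomorphism. Suppose M : ℓ∞(G, X) → X is an X-valued invariant mean (a bounded linear operator with M(x·1_G) = x for all x ∈ X and M(f) = M(s·f) = M(f·s) for all s ∈ G, f ∈ ℓ∞(G,X)). Then M(f) = 0 for every bounded function f : G → X supported on the kernel of θ. -/
/-! Pick `g` with `θ g = 1`. The left translates of a function `f` supported on `ker θ` by
`n • g` (`n ∈ ℕ`) have pairwise disjoint supports, so the sum of the first `N` of them still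
has norm at most `‖f‖`. By invariance `M` maps this sum to `N • M f`, whence `N * ‖M f‖ ≤ ‖M‖ * ‖f‖`
for every `N`, and `M f = 0`. -/

open scoped ENNReal

noncomputable section

abbrev Linf (S : Type*) (X : Type*) [NormedAddCommGroup X] : Type _ :=
  lp (fun _ : S => X) ⊤

def linfConst (S : Type*) {X : Type*} [NormedAddCommGroup X] (x : X) : Linf S X :=
  ⟨fun _ => x, memℓp_infty ⟨‖x‖, by rintro - ⟨t, rfl⟩; exact le_rfl⟩⟩

def lTrans {S X : Type*} [Add S] [NormedAddCommGroup X] (s : S) (f : Linf S X) : Linf S X :=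
  ⟨fun t => f (s + t), memℓp_infty ⟨‖f‖, by
    rintro - ⟨t, rfl⟩; exact lp.norm_apply_le_norm (by simp) f (s + t)⟩⟩

def rTrans {S X : Type*} [Add S] [NormedAddCommGroup X] (s : S) (f : Linf S X) : Linf S X :=
  ⟨fun t => f (t + s), memℓp_infty ⟨‖f‖, by
    rintro - ⟨t, rfl⟩; exact lp.norm_apply_le_norm (by simp) f (t + s)⟩⟩

def IsInvMean {S X : Type*} [Add S] [NormedAddCommGroup X] [NormedSpace ℝ X]
    (lam : ℝ) (M : Linf S X →L[ℝ] X) : Prop :=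
  ‖M‖ ≤ lam ∧ (∀ x : X, M (linfConst S x) = x) ∧
    ∀ (s : S) (f : Linf S X), M (lTrans s f) = M f ∧ M (rTrans s f) = M f

theorem norm_sum_le_of_ne_zero_imp_eq {ι E : Type*} [SeminormedAddCommGroup E]
    {s : Finset ι} {a : ι → E} {C : ℝ} (hC : 0 ≤ C) (ha : ∀ i ∈ s, ‖a i‖ ≤ C)
    (huniq : ∀ i ∈ s, ∀ j ∈ s, a i ≠ 0 → a j ≠ 0 → i = j) :
    ‖∑ i ∈ s, a i‖ ≤ C := by
  by_cases h : ∃ i ∈ s, a i ≠ 0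
  · obtain ⟨i, hi, hai⟩ := h
    rw [Finset.sum_eq_single_of_mem i hi fun j hj hji =>
      by_contra fun haj => hji (huniq j hj i hi haj hai)]
    exact ha i hi
  · push Not at h
    rw [Finset.sum_eq_zero h, norm_zero]
    exact hC

theorem eq_zero_of_forall_norm_nsmul_le {E : Type*} [NormedAddCommGroup E] [NormedSpace ℝ E]
    {v : E} {C : ℝ} (h : ∀ N : ℕ, ‖N • v‖ ≤ C) : v = 0 := by
  by_contra hv
  have hpos : 0 < ‖v‖ := norm_pos_iff.mpr hv
  obtain ⟨N, hN⟩ := exists_nat_gt (C / ‖v‖)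
  have hNv : ‖N • v‖ = N * ‖v‖ := by
    rw [← Nat.cast_smul_eq_nsmul ℝ, norm_smul, Real.norm_natCast]
  linarith [h N, (div_lt_iff₀ hpos).mp hN]

namespace Linf

variable {S X : Type*} [NormedAddCommGroup X]

theorem norm_sum_le_of_ne_zero_imp_eq {ι : Type*} {s : Finset ι} {F : ι → Linf S X} {C : ℝ}
    (hC : 0 ≤ C) (hF : ∀ i ∈ s, ‖F i‖ ≤ C)
    (huniq : ∀ t, ∀ i ∈ s, ∀ j ∈ s, F i t ≠ 0 → F j t ≠ 0 → i = j) :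
    ‖∑ i ∈ s, F i‖ ≤ C := by
  refine lp.norm_le_of_forall_le hC fun t => ?_
  rw [lp.coeFn_sum, Finset.sum_apply]
  exact _root_.norm_sum_le_of_ne_zero_imp_eq hC
    (fun i hi => (lp.norm_apply_le_norm ENNReal.top_ne_zero _ t).trans (hF i hi)) (huniq t)

theorem norm_lTrans_le [Add S] (s : S) (f : Linf S X) : ‖lTrans s f‖ ≤ ‖f‖ :=
  lp.norm_le_of_forall_le (norm_nonneg f) fun t =>
    lp.norm_apply_le_norm ENNReal.top_ne_zero f (s + t)

theorem map_eq_zero_of_translates_disjoint [AddMonoid S] [NormedSpace ℝ X]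
    (M : Linf S X →L[ℝ] X) (g : S) (f : Linf S X)
    (hM : ∀ n : ℕ, M (lTrans (n • g) f) = M f)
    (hdisj : ∀ t, ∀ m n : ℕ, f (m • g + t) ≠ 0 → f (n • g + t) ≠ 0 → m = n) :
    M f = 0 := by
  refine eq_zero_of_forall_norm_nsmul_le (C := ‖M‖ * ‖f‖) fun N => ?_
  have hsum : ‖∑ n ∈ Finset.range N, lTrans (n • g) f‖ ≤ ‖f‖ :=
    norm_sum_le_of_ne_zero_imp_eq (norm_nonneg f) (fun n _ => norm_lTrans_le _ f)
      fun t m _ n _ => hdisj t m n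
  calc ‖N • M f‖ = ‖M (∑ n ∈ Finset.range N, lTrans (n • g) f)‖ := by
        simp only [map_sum, hM, Finset.sum_const, Finset.card_range]
    _ ≤ ‖M‖ * ‖f‖ := M.le_opNorm_of_le hsum

end Linf

theorem invariant_mean_vanishes_on_kernel_supported_general
    {G X : Type*} [AddGroup G] [NormedAddCommGroup X] [NormedSpace ℝ X]
    (θ : G →+ ℤ) (hθ : Function.Surjective θ)
    (lam : ℝ) (M : Linf G X →L[ℝ] X) (hM : IsInvMean lam M)
    (f : Linf G X) (hf : ∀ t : G, θ t ≠ 0 → f t = 0) :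
    M f = 0 := by
  obtain ⟨g, hg⟩ := hθ 1
  refine Linf.map_eq_zero_of_translates_disjoint M g f (fun n => (hM.2.2 _ f).1) ?_
  intro t m n hm hn
  have hθm : θ (m • g + t) = 0 := not_imp_comm.mp (hf _) hm
  have hθn : θ (n • g + t) = 0 := not_imp_comm.mp (hf _) hn
  simp only [map_add, map_nsmul, hg, nsmul_eq_mul, mul_one] at hθm hθn
  omega

theorem invariant_mean_vanishes_on_kernel_supported
    {G X : Type*} [AddGroup G] [NormedAddCommGroup X] [NormedSpace ℝ X] [CompleteSpace X]
    (θ : G →+ ℤ) (hθ : Function.Surjective θ)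
    (lam : ℝ) (M : Linf G X →L[ℝ] X) (hM : IsInvMean lam M)
    (f : Linf G X) (hf : ∀ t : G, θ t ≠ 0 → f t = 0) :
    M f = 0 :=
  invariant_mean_vanishes_on_kernel_supported_general θ hθ lam M hM f hf

end
end

section
/- Let X be a Banach space and λ ≥ 1. If for some cardinal α there exists an X-valued invariant λ-mean on the free Abelian group ℤ^(α) (the direct sum of α copies of ℤ), then there exists an X-valued invariant λ-mean on the free commutative monoid ℕ^(α). -/
open scoped ENNReal

noncomputable section

/-!
Pull an invariant mean `M` on `ℤ^(ι)` back along the coordinatewise absolute value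
`|·| : ℤ^(ι) → ℕ^(ι)`. Only invariance under a generator `eᵢ` needs an argument:
`f (eᵢ + |g|)` is `f |g + eᵢ|` where `gᵢ ≥ 0` and `f |g - eᵢ|` where `gᵢ < 0`. Translating the
two pieces back, `M` sees `f |g|` restricted to `gᵢ ≥ 1` plus `f |g|` restricted to `gᵢ ≤ -2`,
and the difference from `f |g|` lives on the slab `-1 ≤ gᵢ ≤ 0`. A bounded function supported
on a slab has mean zero: arbitrarily many of its translates have disjoint supports, so their sum
has the same norm while its mean is a multiple of the original one.
-/

open Finsupp

namespace Finsupp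

variable {ι : Type*}

theorem addSubmonoid_eq_top_of_single_one_mem (P : AddSubmonoid (ι →₀ ℕ))
    (h : ∀ i, single i 1 ∈ P) : P = ⊤ := by
  refine top_unique (add_closure_setOfPred_eq_single.symm.trans_le (AddSubmonoid.closure_le.2 ?_))
  rintro _ ⟨i, n, rfl⟩
  rw [← smul_single_one]
  exact P.nsmul_mem (h i) n

def natAbs (g : ι →₀ ℤ) : ι →₀ ℕ :=
  mapRange Int.natAbs Int.natAbs_zero g

@[simp]
theorem natAbs_apply (g : ι →₀ ℤ) (i : ι) : natAbs g i = (g i).natAbs :=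
  mapRange_apply

theorem natAbs_single_one_add {g : ι →₀ ℤ} {i : ι} (h : 0 ≤ g i) :
    natAbs (single i 1 + g) = single i 1 + natAbs g := by
  ext j
  rcases eq_or_ne i j with rfl | hj
  · simp only [natAbs_apply, coe_add, Pi.add_apply, single_eq_same]
    omega
  · simp [single_eq_of_ne' hj]

theorem natAbs_neg_single_one_add {g : ι →₀ ℤ} {i : ι} (h : g i ≤ 0) :
    natAbs (-single i 1 + g) = single i 1 + natAbs g := by
  ext j
  rcases eq_or_ne i j with rfl | hj
  · simp only [natAbs_apply, coe_add, coe_neg, Pi.add_apply, Pi.neg_apply, single_eq_same]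
    omega
  · simp [single_eq_of_ne' hj]

end Finsupp

namespace Linf

variable {S T X : Type*} [NormedAddCommGroup X]

@[simp]
theorem lTrans_apply [Add S] (s : S) (f : Linf S X) (t : S) : lTrans s f t = f (s + t) :=
  rfl

def restrict (A : Set S) (f : Linf S X) : Linf S X :=
  ⟨A.indicator f, memℓp_infty ⟨‖f‖, by
    rintro - ⟨t, rfl⟩
    by_cases ht : t ∈ A
    · simpa [ht] using lp.norm_apply_le_norm (by simp) f t
    · simp [ht]⟩⟩

@[simp]
theorem restrict_apply (A : Set S) (f : Linf S X) (t : S) :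
    restrict A f t = A.indicator f t :=
  rfl

theorem lTrans_restrict [Add S] (s : S) (A : Set S) (f : Linf S X) :
    lTrans s (restrict A f) = restrict ((s + ·) ⁻¹' A) (lTrans s f) :=
  rfl

theorem lTrans_add [AddSemigroup S] (s t : S) (f : Linf S X) :
    lTrans (s + t) f = lTrans t (lTrans s f) := by
  ext x
  simp [add_assoc]

theorem rTrans_eq_lTrans [AddCommMagma S] (s : S) (f : Linf S X) : rTrans s f = lTrans s f := by
  ext t
  exact congrArg f (add_comm t s)

variable [NormedSpace ℝ X]

def comp (φ : T → S) : Linf S X →L[ℝ] Linf T X :=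
  LinearMap.mkContinuous
    { toFun := fun f => ⟨fun t => f (φ t), memℓp_infty ⟨‖f‖, by
        rintro - ⟨t, rfl⟩; exact lp.norm_apply_le_norm (by simp) f (φ t)⟩⟩
      map_add' := fun _ _ => rfl
      map_smul' := fun _ _ => rfl }
    1 fun f => by
      rw [one_mul]
      exact lp.norm_le_of_forall_le (norm_nonneg f) fun t => lp.norm_apply_le_norm (by simp) f _

@[simp]
theorem comp_apply (φ : T → S) (f : Linf S X) (t : T) : comp φ f t = f (φ t) :=
  rfl

theorem norm_comp_le (φ : T → S) : ‖(comp φ : Linf S X →L[ℝ] Linf T X)‖ ≤ 1 :=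
  LinearMap.mkContinuous_norm_le _ zero_le_one _

end Linf

section

variable {S ι X : Type*} [NormedAddCommGroup X] [NormedSpace ℝ X]

theorem map_eq_zero_of_disjoint_translates [Add S] (M : Linf S X →L[ℝ] X) (F : Linf S X)
    (t : ℕ → S) (hM : ∀ k, M (lTrans (t k) F) = M F)
    (ht : ∀ x j k, F (t j + x) ≠ 0 → F (t k + x) ≠ 0 → j = k) : M F = 0 := by
  have hsum : ∀ n, ‖∑ k ∈ Finset.range n, lTrans (t k) F‖ ≤ ‖F‖ := by
    refine fun n => lp.norm_le_of_forall_le (norm_nonneg F) fun x => ?_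
    simp only [lp.coeFn_sum, Finset.sum_apply, Linf.lTrans_apply]
    by_cases hx : ∃ j ∈ Finset.range n, F (t j + x) ≠ 0
    · obtain ⟨j, hj, hFj⟩ := hx
      rw [Finset.sum_eq_single_of_mem j hj fun k _ hkj =>
        not_not.1 fun hFk => hkj (ht x k j hFk hFj)]
      exact lp.norm_apply_le_norm (by simp) F _
    · push Not at hx
      rw [Finset.sum_eq_zero hx, norm_zero]
      exact norm_nonneg F
  have hmul : ∀ n : ℕ, n * ‖M F‖ ≤ ‖M‖ * ‖F‖ := fun n =>
    calc (n : ℝ) * ‖M F‖ = ‖M (∑ k ∈ Finset.range n, lTrans (t k) F)‖ := by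
          rw [map_sum, Finset.sum_congr rfl fun k _ => hM k, Finset.sum_const, Finset.card_range,
            ← Nat.cast_smul_eq_nsmul ℝ, norm_smul, Real.norm_natCast]
      _ ≤ ‖M‖ * ‖F‖ := M.le_opNorm_of_le (hsum n)
  by_contra hne
  obtain ⟨n, hn⟩ := exists_nat_gt (‖M‖ * ‖F‖ / ‖M F‖)
  rw [div_lt_iff₀ (norm_pos_iff.2 hne)] at hn
  linarith [hmul n]

theorem map_eq_zero_of_support_slab (M : Linf (ι →₀ ℤ) X →L[ℝ] X)
    (hM : ∀ s F, M (lTrans s F) = M F) (i : ι) (a : ℤ) (n : ℕ) (F : Linf (ι →₀ ℤ) X)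
    (hF : ∀ g, F g ≠ 0 → a ≤ g i ∧ g i < a + n) : M F = 0 := by
  refine map_eq_zero_of_disjoint_translates M F (fun k => single i (n * k : ℤ)) (fun k => hM _ F)
    fun x j k hj hk => ?_
  have hj := hF _ hj
  have hk := hF _ hk
  simp only [coe_add, Pi.add_apply, single_eq_same] at hj hk
  by_contra hjk
  rcases Nat.lt_or_gt_of_ne hjk with h | h <;> nlinarith

def leftStabilizer [AddMonoid S] (M : Linf S X →L[ℝ] X) : AddSubmonoid S where
  carrier := {s | ∀ f, M (lTrans s f) = M f}
  zero_mem' f := by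
    congr 1
    ext x
    simp
  add_mem' {s t} hs ht f := by
    rw [Linf.lTrans_add]
    exact (ht _).trans (hs f)

theorem map_comp_natAbs_lTrans_single_one (M : Linf (ι →₀ ℤ) X →L[ℝ] X)
    (hM : ∀ s F, M (lTrans s F) = M F) (i : ι) (f : Linf (ι →₀ ℕ) X) :
    M (Linf.comp natAbs (lTrans (single i 1) f)) = M (Linf.comp natAbs f) := by
  set ε : ι →₀ ℤ := single i 1
  set F := Linf.comp natAbs f
  have hsplit : Linf.comp natAbs (lTrans (single i 1) f) =
      Linf.restrict {g | 0 ≤ g i} (lTrans ε F) + Linf.restrict {g | g i < 0} (lTrans (-ε) F) := by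
    ext g
    by_cases h : 0 ≤ g i
    · simp [F, ε, h, natAbs_single_one_add h]
    · simp [F, ε, not_le.1 h, natAbs_neg_single_one_add (le_of_not_ge h)]
  have hup : Linf.restrict {g | 0 ≤ g i} (lTrans ε F) =
      lTrans ε (Linf.restrict {g | 1 ≤ g i} F) := by
    rw [Linf.lTrans_restrict]
    congr
    ext g
    simp [ε]
  have hdown : Linf.restrict {g | g i < 0} (lTrans (-ε) F) =
      lTrans (-ε) (Linf.restrict {g | g i < -1} F) := by
    rw [Linf.lTrans_restrict]
    congr
    ext g
    simp [ε]
  have hslab : M (F - Linf.restrict {g | 1 ≤ g i} F - Linf.restrict {g | g i < -1} F) = 0 := by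
    refine map_eq_zero_of_support_slab M hM i (-1) 2 _ fun g hg => ?_
    by_contra hout
    apply hg
    rcases le_or_gt 1 (g i) with h | h
    · simp [h, show ¬g i < -1 by omega]
    · simp [not_le.2 h, show g i < -1 by omega]
  rw [map_sub, map_sub, sub_sub, sub_eq_zero] at hslab
  rw [hsplit, map_add, hup, hdown, hM, hM, hslab]

theorem IsInvMean.comp_natAbs {lam : ℝ}
    {M : Linf (ι →₀ ℤ) X →L[ℝ] X} (hM : IsInvMean lam M) :
    IsInvMean lam (M.comp (Linf.comp natAbs)) := by
  obtain ⟨hnorm, hconst, hinv⟩ := hM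
  have hleft : leftStabilizer (M.comp (Linf.comp natAbs)) = ⊤ :=
    addSubmonoid_eq_top_of_single_one_mem _ fun i f =>
      map_comp_natAbs_lTrans_single_one M (fun s F => (hinv s F).1) i f
  have hs (s : ι →₀ ℕ) : s ∈ leftStabilizer (M.comp (Linf.comp natAbs)) :=
    hleft ▸ AddSubmonoid.mem_top s
  refine ⟨?_, hconst, fun s f => ⟨hs s f, by rw [Linf.rTrans_eq_lTrans, hs s f]⟩⟩
  calc ‖M.comp (Linf.comp natAbs)‖ ≤ ‖M‖ * ‖(Linf.comp natAbs : Linf _ X →L[ℝ] _)‖ :=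
        M.opNorm_comp_le _
    _ ≤ ‖M‖ := mul_le_of_le_one_right (norm_nonneg M) (Linf.norm_comp_le _)
    _ ≤ lam := hnorm

end

theorem mean_on_free_abelian_gives_mean_on_free_monoid_general
    {ι X : Type*} [NormedAddCommGroup X] [NormedSpace ℝ X]
    (lam : ℝ)
    (h : ∃ M : Linf (ι →₀ ℤ) X →L[ℝ] X, IsInvMean lam M) :
    ∃ M' : Linf (ι →₀ ℕ) X →L[ℝ] X, IsInvMean lam M' :=
  let ⟨_, hM⟩ := h
  ⟨_, hM.comp_natAbs⟩

theorem mean_on_free_abelian_gives_mean_on_free_monoid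
    {ι X : Type*} [NormedAddCommGroup X] [NormedSpace ℝ X] [CompleteSpace X]
    (lam : ℝ) (hlam : 1 ≤ lam)
    (h : ∃ M : Linf (ι →₀ ℤ) X →L[ℝ] X, IsInvMean lam M) :
    ∃ M' : Linf (ι →₀ ℕ) X →L[ℝ] X, IsInvMean lam M' :=
  mean_on_free_abelian_gives_mean_on_free_monoid_general lam h

end
end

section
/- Let X be a Banach space, G a group, and H a normal subgroup of G. If there exists an X-valued invariant λ-mean on G, then there exists an X-valued invariant λ-mean on the quotient group G/H. -/
open scoped ENNReal

noncomputable section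

/-! Pulling a bounded function on `G ⧸ H` back along the quotient map is a norm-one operator
that preserves constants and intertwines translation by `g + H` with translation by `g`,
so composing an invariant mean on `G` with it gives one on `G ⧸ H` of no larger norm. -/

namespace Linf

variable {S T X : Type*} [NormedAddCommGroup X] [NormedSpace ℝ X]

def pullback (φ : S → T) : Linf T X →L[ℝ] Linf S X :=
  LinearMap.mkContinuous
    { toFun := fun f => ⟨fun s => f (φ s), memℓp_infty ⟨‖f‖, by
        rintro - ⟨s, rfl⟩; exact lp.norm_apply_le_norm (by simp) f (φ s)⟩⟩
      map_add' := fun _ _ => rfl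
      map_smul' := fun _ _ => rfl }
    1 fun f => by
      rw [one_mul]
      exact lp.norm_le_of_forall_le (norm_nonneg f) fun s =>
        lp.norm_apply_le_norm (by simp) f (φ s)

@[simp]
theorem pullback_apply (φ : S → T) (f : Linf T X) (s : S) : pullback φ f s = f (φ s) :=
  rfl

theorem norm_pullback_le_one (φ : S → T) : ‖(pullback φ : Linf T X →L[ℝ] Linf S X)‖ ≤ 1 :=
  LinearMap.mkContinuous_norm_le _ zero_le_one _

theorem pullback_linfConst (φ : S → T) (x : X) :
    pullback φ (linfConst T x) = linfConst S x :=
  rfl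

theorem pullback_lTrans [Add S] [Add T] (φ : S →ₙ+ T) (s : S) (f : Linf T X) :
    pullback φ (lTrans (φ s) f) = lTrans s (pullback φ f) := by
  ext t
  simp [lTrans]

theorem pullback_rTrans [Add S] [Add T] (φ : S →ₙ+ T) (s : S) (f : Linf T X) :
    pullback φ (rTrans (φ s) f) = rTrans s (pullback φ f) := by
  ext t
  simp [rTrans]

end Linf

theorem IsInvMean.comp_pullback {S T X : Type*} [Add S] [Add T] [NormedAddCommGroup X]
    [NormedSpace ℝ X] {lam : ℝ} {M : Linf S X →L[ℝ] X} (hM : IsInvMean lam M)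
    (φ : S →ₙ+ T) (hφ : Function.Surjective φ) :
    IsInvMean lam (M.comp (Linf.pullback φ)) := by
  obtain ⟨hnorm, hconst, hinv⟩ := hM
  refine ⟨?_, fun x => ?_, fun t f => ?_⟩
  · calc ‖M.comp (Linf.pullback φ)‖ ≤ ‖M‖ * ‖(Linf.pullback φ : Linf T X →L[ℝ] Linf S X)‖ :=
          M.opNorm_comp_le _
      _ ≤ ‖M‖ := mul_le_of_le_one_right (norm_nonneg M) (Linf.norm_pullback_le_one φ)
      _ ≤ lam := hnorm
  · simp only [ContinuousLinearMap.comp_apply, Linf.pullback_linfConst, hconst]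
  · obtain ⟨s, rfl⟩ := hφ t
    simp only [ContinuousLinearMap.comp_apply, Linf.pullback_lTrans, Linf.pullback_rTrans]
    exact hinv s _

theorem invariant_mean_passes_to_quotient_general
    {G X : Type*} [AddGroup G] [NormedAddCommGroup X] [NormedSpace ℝ X]
    (H : AddSubgroup G) [H.Normal] (lam : ℝ)
    (h : ∃ M : Linf G X →L[ℝ] X, IsInvMean lam M) :
    ∃ M' : Linf (G ⧸ H) X →L[ℝ] X, IsInvMean lam M' := by
  obtain ⟨M, hM⟩ := h
  exact ⟨_, hM.comp_pullback (QuotientAddGroup.mk' H).toAddHom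
    (QuotientAddGroup.mk'_surjective H)⟩

theorem invariant_mean_passes_to_quotient
    {G X : Type*} [AddGroup G] [NormedAddCommGroup X] [NormedSpace ℝ X] [CompleteSpace X]
    (H : AddSubgroup G) [H.Normal] (lam : ℝ)
    (h : ∃ M : Linf G X →L[ℝ] X, IsInvMean lam M) :
    ∃ M' : Linf (G ⧸ H) X →L[ℝ] X, IsInvMean lam M' :=
  invariant_mean_passes_to_quotient_general H lam h

end
end

section
/- Let V be an infinite-dimensional vector space over an arbitrary field. Then there exists a binary operation ∗ on the set Fin V of all finite-dimensional subspaces of V such that (Fin V, ∗) is a free commutative monoid and for all F, G ∈ Fin V, both F and G are contained (as subspaces) in F ∗ G. -/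
/-!
Transport addition along a monotone bijection `f : (Fin V →₀ ℕ) → Fin V`: then
`F ∗ G := f (f⁻¹ F + f⁻¹ G)` contains `F` and `G`. With `κ = #(Fin V)`, such an `f` is built by a
back-and-forth construction of length `κ` through partial monotone injections with downward closed
domain and fewer than `κ` points. Forth, a point whose strict predecessors are already mapped is
sent to a fresh subspace above their finitely many images; this is possible because above every
finite-dimensional subspace lie `κ` others. Back, a prescribed subspace becomes the image of a fresh
atom `single i 1`, with `i` outside all supports used so far, so that only `0 ↦ ⊥` lies below it.
-/

open Cardinal Set

universe u v

namespace Cardinal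

theorem mk_union_lt {β : Type u} {κ : Cardinal.{u}} (hκ : ℵ₀ ≤ κ) {s t : Set β}
    (hs : #s < κ) (ht : #t < κ) : #(s ∪ t : Set β) < κ :=
  (mk_union_le s t).trans_lt (add_lt_of_lt hκ hs ht)

theorem mk_biUnion_lt_of_finite {β γ : Type u} {κ : Cardinal.{u}} (hκ : ℵ₀ ≤ κ) {s : Set β}
    (hs : #s < κ) {t : β → Set γ} (ht : ∀ i ∈ s, (t i).Finite) : #(⋃ i ∈ s, t i) < κ := by
  rcases lt_or_ge #s ℵ₀ with hfin | hinf
  · exact (((lt_aleph0_iff_set_finite.mp hfin).biUnion ht).lt_aleph0).trans_le hκ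
  · calc #(⋃ i ∈ s, t i) ≤ #s * ⨆ i : s, #(t i) := mk_biUnion_le t s
      _ ≤ #s * ℵ₀ := by gcongr; exact ciSup_le' fun i => (ht i i.2).lt_aleph0.le
      _ = #s := mul_eq_left hinf hinf aleph0_ne_zero
      _ < κ := hs

end Cardinal

/-- Adding only finitely many points at each step keeps every stage of size `< κ`, even for
singular `κ`. -/
theorem exists_of_finite_extensions {X ι : Type u} {κ : Cardinal.{u}} (hκ : ℵ₀ ≤ κ) (hι : #ι ≤ κ)
    {Good : Set X → Prop}
    (hchain : ∀ c : Set (Set X), IsChain (· ⊆ ·) c → c.Nonempty → (∀ P ∈ c, Good P) → Good (⋃₀ c))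
    {R : ι → Set X → Prop} (hR : ∀ j, Monotone (R j))
    (hext : ∀ j P, Good P → #P < κ → ∃ D : Set X, D.Finite ∧ Good (P ∪ D) ∧ R j (P ∪ D))
    {P₀ : Set X} (hP₀ : Good P₀) (hP₀κ : #P₀ < κ) :
    ∃ P, Good P ∧ ∀ j, R j P := by
  obtain ⟨r, _, hr⟩ := exists_ord_eq ι
  have hwf : WellFounded r := IsWellFounded.wf
  choose! F hF using hext
  let D : ι → Set X := hwf.fix fun j D => F j (P₀ ∪ ⋃ (i) (h : r i j), D i h)
  let stage (S : Set ι) : Set X := P₀ ∪ ⋃ i ∈ S, D i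
  have hD (j : ι) : D j = F j (stage {i | r i j}) := hwf.fix_eq _ j
  have stage_mono {S : Set ι} {i : ι} (hS : ∀ k, r k i → k ∈ S) (hi : i ∈ S) :
      stage {k | r k i} ∪ D i ⊆ stage S :=
    union_subset (union_subset_union_right _ (biUnion_mono hS fun _ _ => le_rfl))
      (subset_union_of_subset_right (subset_biUnion_of_mem hi) _)
  have good_stage {S : Set ι} (hS : ∀ i ∈ S, ∀ k, r k i → k ∈ S)
      (hgood : ∀ i ∈ S, Good (stage {k | r k i} ∪ D i)) : Good (stage S) := by
    have hc : stage S = ⋃₀ insert P₀ ((fun i => stage {k | r k i} ∪ D i) '' S) := by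
      refine subset_antisymm (union_subset ?_ (iUnion₂_subset fun i hi => ?_)) ?_
      · exact subset_sUnion_of_mem (mem_insert _ _)
      · exact subset_sUnion_of_subset _ _ subset_union_right (mem_insert_of_mem _ ⟨i, hi, rfl⟩)
      · refine sUnion_subset ?_
        rintro _ (rfl | ⟨i, hi, rfl⟩)
        · exact subset_union_left
        · exact stage_mono (hS i hi) hi
    rw [hc]
    refine hchain _ ?_ (insert_nonempty _ _) ?_
    · refine IsChain.insert ?_ ?_
      · rintro _ ⟨i, hi, rfl⟩ _ ⟨i', hi', rfl⟩ -
        rcases trichotomous_of r i i' with h | rfl | h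
        · exact Or.inl ((stage_mono (S := {k | r k i'}) (fun k hk => _root_.trans hk h) h).trans
            subset_union_left)
        · exact Or.inl le_rfl
        · exact Or.inr ((stage_mono (S := {k | r k i}) (fun k hk => _root_.trans hk h) h).trans
            subset_union_left)
      · rintro _ ⟨i, hi, rfl⟩ -
        exact Or.inl (subset_union_left.trans subset_union_left)
    · rintro _ (rfl | ⟨i, hi, rfl⟩)
      exacts [hP₀, hgood i hi]
  have stage_spec (j : ι) :
      (D j).Finite ∧ Good (stage {k | r k j} ∪ D j) ∧ R j (stage {k | r k j} ∪ D j) := by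
    induction j using hwf.induction with
    | _ j IH =>
    have hgood : Good (stage {k | r k j}) :=
      good_stage (fun i hi k hk => _root_.trans hk hi) fun i hi => (IH i hi).2.1
    have hsmall : #(stage {k | r k j}) < κ :=
      mk_union_lt hκ hP₀κ <| mk_biUnion_lt_of_finite hκ ((card_typein_lt j hr).trans_le hι)
        fun i hi => (IH i hi).1
    rw [hD j]
    exact hF j _ hgood hsmall
  refine ⟨stage univ, good_stage (fun _ _ _ _ => mem_univ _) fun i _ => (stage_spec i).2.1,
    fun j => hR j (stage_mono (fun _ _ => mem_univ _) (mem_univ j)) (stage_spec j).2.2⟩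

theorem exists_finite_extension_forall_mem {X ι : Type*} {κ : Cardinal} (hκ : ℵ₀ ≤ κ)
    {Good : Set X → Prop} {R : ι → Set X → Prop} (hR : ∀ j, Monotone (R j)) (s : Finset ι)
    (hext : ∀ j ∈ s, ∀ P, Good P → #P < κ → ∃ D : Set X, D.Finite ∧ Good (P ∪ D) ∧ R j (P ∪ D))
    {P : Set X} (hP : Good P) (hPκ : #P < κ) :
    ∃ D : Set X, D.Finite ∧ Good (P ∪ D) ∧ ∀ j ∈ s, R j (P ∪ D) := by
  classical
  induction s using Finset.induction_on with
  | empty => exact ⟨∅, finite_empty, by simpa using hP, by simp⟩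
  | insert j s _ IH =>
    obtain ⟨D₁, hD₁, hgood₁, hR₁⟩ := IH fun i hi => hext i (Finset.mem_insert_of_mem hi)
    obtain ⟨D₂, hD₂, hgood₂, hR₂⟩ := hext j (Finset.mem_insert_self j s) (P ∪ D₁) hgood₁
      (mk_union_lt hκ hPκ (hD₁.lt_aleph0.trans_le hκ))
    rw [union_assoc] at hgood₂ hR₂
    refine ⟨D₁ ∪ D₂, hD₁.union hD₂, hgood₂, fun i hi => ?_⟩
    rcases Finset.mem_insert.mp hi with rfl | hi
    · exact hR₂
    · exact hR i (by rw [← union_assoc]; exact subset_union_left) (hR₁ i hi)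

theorem exists_mem_upperBounds_notMem {α : Type*} [Preorder α] [IsDirectedOrder α] [Nonempty α]
    (hIci : ∀ x : α, #α ≤ #(Ici x)) {s : Set α} (hs : s.Finite) {U : Set α} (hU : #U < #α) :
    ∃ W ∈ upperBounds s, W ∉ U := by
  obtain ⟨x, hx⟩ := hs.bddAbove
  obtain ⟨W, hxW, hWU⟩ : (Ici x \ U).Nonempty :=
    sdiff_nonempty.mpr fun h => (hU.trans_le (hIci x)).not_ge (mk_le_mk_of_subset h)
  exact ⟨W, fun y hy => (hx hy).trans hxW, hWU⟩

theorem Finsupp.eq_zero_or_eq_of_le_single_one {α : Type*} {b : α →₀ ℕ} {i : α}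
    (h : b ≤ single i 1) : b = 0 ∨ b = single i 1 := by
  classical
  have h' := orderIsoMultiset.le_iff_le.mpr h
  rw [coe_orderIsoMultiset, toMultiset_single, one_nsmul, Multiset.le_singleton] at h'
  rcases h' with h' | h'
  · exact Or.inl (orderIsoMultiset.injective (by simpa using h'))
  · exact Or.inr (orderIsoMultiset.injective (by simpa using h'))

section PartialMonoInj

variable {α : Type u} [PartialOrder α] [OrderBot α]

/-- The graph of a partial monotone injection `(α →₀ ℕ) → α` with downward closed domain and
`0 ↦ ⊥`; it is functional by `mono` and antisymmetry. -/
structure IsPartialMonoInj (P : Set ((α →₀ ℕ) × α)) : Prop where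
  zero_bot_mem : ((0 : α →₀ ℕ), (⊥ : α)) ∈ P
  inj : ∀ p ∈ P, ∀ q ∈ P, p.2 = q.2 → p.1 = q.1
  mono : ∀ p ∈ P, ∀ q ∈ P, p.1 ≤ q.1 → p.2 ≤ q.2
  fst_mem_of_le : ∀ p ∈ P, ∀ a ≤ p.1, a ∈ Prod.fst '' P

namespace IsPartialMonoInj

variable {P : Set ((α →₀ ℕ) × α)}

theorem snd_eq (hP : IsPartialMonoInj P) {p q : (α →₀ ℕ) × α} (hp : p ∈ P) (hq : q ∈ P)
    (h : p.1 = q.1) : p.2 = q.2 :=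
  le_antisymm (hP.mono p hp q hq h.le) (hP.mono q hq p hp h.ge)

theorem sUnion {c : Set (Set ((α →₀ ℕ) × α))} (hc : IsChain (· ⊆ ·) c) (hne : c.Nonempty)
    (h : ∀ P ∈ c, IsPartialMonoInj P) : IsPartialMonoInj (⋃₀ c) := by
  have common {p q} (hp : p ∈ ⋃₀ c) (hq : q ∈ ⋃₀ c) : ∃ P ∈ c, p ∈ P ∧ q ∈ P := by
    obtain ⟨P, hP, hpP⟩ := hp
    obtain ⟨Q, hQ, hqQ⟩ := hq
    obtain ⟨S, hS, hPS, hQS⟩ := hc.directedOn P hP Q hQ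
    exact ⟨S, hS, hPS hpP, hQS hqQ⟩
  obtain ⟨P, hP⟩ := hne
  refine ⟨subset_sUnion_of_mem hP (h P hP).zero_bot_mem, ?_, ?_, ?_⟩
  · intro p hp q hq
    obtain ⟨S, hS, hpS, hqS⟩ := common hp hq
    exact (h S hS).inj p hpS q hqS
  · intro p hp q hq
    obtain ⟨S, hS, hpS, hqS⟩ := common hp hq
    exact (h S hS).mono p hpS q hqS
  · intro p hp a ha
    obtain ⟨S, hS, hpS, -⟩ := common hp hp
    exact image_mono (subset_sUnion_of_mem hS) ((h S hS).fst_mem_of_le p hpS a ha)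

theorem insert_pair (hP : IsPartialMonoInj P) {a : α →₀ ℕ} {W : α} (hW : W ∉ Prod.snd '' P)
    (hmax : ∀ p ∈ P, ¬ a ≤ p.1) (hlow : ∀ p ∈ P, p.1 < a → p.2 ≤ W)
    (hdown : ∀ b < a, b ∈ Prod.fst '' P) : IsPartialMonoInj (insert (a, W) P) := by
  refine ⟨mem_insert_of_mem _ hP.zero_bot_mem, ?_, ?_, ?_⟩
  · rintro p (rfl | hp) q (rfl | hq) h
    · rfl
    · exact absurd ⟨q, hq, h.symm⟩ hW
    · exact absurd ⟨p, hp, h⟩ hW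
    · exact hP.inj p hp q hq h
  · rintro p (rfl | hp) q (rfl | hq) h
    · exact le_rfl
    · exact absurd h (hmax q hq)
    · exact hlow p hp (lt_of_le_not_ge h (hmax p hp))
    · exact hP.mono p hp q hq h
  · rintro p (rfl | hp) b hb
    · rcases hb.eq_or_lt with rfl | hlt
      · exact ⟨_, mem_insert _ _, rfl⟩
      · exact image_mono (subset_insert _ _) (hdown b hlt)
    · exact image_mono (subset_insert _ _) (hP.fst_mem_of_le p hp b hb)

theorem exists_insert_of_forall_lt_mem [IsDirectedOrder α] (hIci : ∀ x : α, #α ≤ #(Ici x))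
    (hP : IsPartialMonoInj P) (hPα : #P < #α) {a : α →₀ ℕ} (ha : a ∉ Prod.fst '' P)
    (hdown : ∀ b < a, b ∈ Prod.fst '' P) : ∃ W, IsPartialMonoInj (insert (a, W) P) := by
  classical
  have hfin : (Prod.snd '' {p ∈ P | p.1 < a}).Finite := by
    refine Finite.image _ (Finite.of_finite_image (f := Prod.fst) ((finite_Iio a).subset ?_) ?_)
    · rintro _ ⟨p, hp, rfl⟩
      exact hp.2
    · exact fun p hp q hq h => Prod.ext h (hP.snd_eq hp.1 hq.1 h)
  obtain ⟨W, hW, hWP⟩ := exists_mem_upperBounds_notMem hIci hfin (mk_image_le.trans_lt hPα)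
  exact ⟨W, hP.insert_pair hWP (fun p hp h => ha (hP.fst_mem_of_le p hp a h))
    (fun p hp h => hW ⟨p, ⟨hp, h⟩, rfl⟩) hdown⟩

theorem exists_monotone_bijective (hP : IsPartialMonoInj P) (hfst : ∀ a, a ∈ Prod.fst '' P)
    (hsnd : ∀ W, W ∈ Prod.snd '' P) : ∃ f : (α →₀ ℕ) → α, Monotone f ∧ Function.Bijective f := by
  choose p hp hpa using hfst
  refine ⟨fun a => (p a).2, fun a b h => hP.mono _ (hp a) _ (hp b) (by rwa [hpa, hpa]),
    fun a b h => ?_, fun W => ?_⟩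
  · rw [← hpa a, ← hpa b]
    exact hP.inj _ (hp a) _ (hp b) h
  · obtain ⟨q, hq, rfl⟩ := hsnd W
    exact ⟨q.1, hP.snd_eq (hp q.1) hq (hpa q.1)⟩

variable [Infinite α]

theorem exists_finite_union_fst_mem [IsDirectedOrder α] (hIci : ∀ x : α, #α ≤ #(Ici x))
    (a : α →₀ ℕ) (hP : IsPartialMonoInj P) (hPα : #P < #α) :
    ∃ D, D.Finite ∧ IsPartialMonoInj (P ∪ D) ∧ a ∈ Prod.fst '' (P ∪ D) := by
  classical
  induction a using WellFoundedLT.induction generalizing P with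
  | _ a IH =>
  obtain ⟨D, hD, hgood, hlt⟩ := exists_finite_extension_forall_mem (aleph0_le_mk α)
    (R := fun b Q => b ∈ Prod.fst '' Q) (fun _ _ _ h hb => image_mono h hb) (finite_Iio a).toFinset
    (fun b hb _ hQ hQα => IH b (by simpa using hb) hQ hQα) hP hPα
  by_cases ha : a ∈ Prod.fst '' (P ∪ D)
  · exact ⟨D, hD, hgood, ha⟩
  obtain ⟨W, hW⟩ := hgood.exists_insert_of_forall_lt_mem hIci
    (mk_union_lt (aleph0_le_mk α) hPα (hD.lt_aleph0.trans_le (aleph0_le_mk α))) ha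
    fun b hb => hlt b (by simpa using hb)
  rw [← union_insert] at hW
  exact ⟨insert (a, W) D, hD.insert _, hW, ⟨(a, W), subset_union_right (mem_insert _ _), rfl⟩⟩

theorem exists_insert_of_notMem_snd (hP : IsPartialMonoInj P) (hPα : #P < #α) {W : α}
    (hW : W ∉ Prod.snd '' P) : ∃ a, IsPartialMonoInj (insert (a, W) P) := by
  have hsmall : #(⋃ p ∈ P, (p.1.support : Set α)) < #α :=
    mk_biUnion_lt_of_finite (aleph0_le_mk α) hPα fun p _ => p.1.support.finite_toSet
  obtain ⟨i, hi⟩ : ∃ i, i ∉ ⋃ p ∈ P, (p.1.support : Set α) := by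
    by_contra! h
    rw [eq_univ_of_forall h, mk_univ] at hsmall
    exact hsmall.false
  simp only [mem_iUnion, not_exists, Finset.mem_coe, Finsupp.mem_support_iff, not_not] at hi
  have eq_zero {b : α →₀ ℕ} (hb : b < Finsupp.single i 1) : b = 0 :=
    (Finsupp.eq_zero_or_eq_of_le_single_one hb.le).resolve_right hb.ne
  refine ⟨Finsupp.single i 1,
    hP.insert_pair hW (fun p hp h => ?_) (fun p hp h => ?_) fun b hb => ?_⟩
  · simpa [hi p hp] using Finsupp.single_le_iff.mp h
  · exact (hP.snd_eq hp hP.zero_bot_mem (eq_zero h)).trans_le bot_le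
  · exact ⟨_, hP.zero_bot_mem, (eq_zero hb).symm⟩

theorem exists_finite_union_snd_mem (W : α) (hP : IsPartialMonoInj P) (hPα : #P < #α) :
    ∃ D, D.Finite ∧ IsPartialMonoInj (P ∪ D) ∧ W ∈ Prod.snd '' (P ∪ D) := by
  by_cases hW : W ∈ Prod.snd '' P
  · exact ⟨∅, finite_empty, by rwa [union_empty], by rwa [union_empty]⟩
  obtain ⟨a, ha⟩ := hP.exists_insert_of_notMem_snd hPα hW
  rw [← union_singleton] at ha
  exact ⟨{(a, W)}, finite_singleton _, ha, ⟨(a, W), subset_union_right rfl, rfl⟩⟩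

end IsPartialMonoInj

theorem exists_monotone_bijective_finsupp [Infinite α] [IsDirectedOrder α]
    (hIci : ∀ x : α, #α ≤ #(Ici x)) : ∃ f : (α →₀ ℕ) → α, Monotone f ∧ Function.Bijective f := by
  have hκ := aleph0_le_mk α
  have hι : #((α →₀ ℕ) ⊕ α) ≤ #α := by
    rw [mk_sum, mk_finsupp_nat, max_eq_left hκ, lift_id, add_eq_self hκ]
  have hP₀ : IsPartialMonoInj {((0 : α →₀ ℕ), (⊥ : α))} := by
    refine ⟨rfl, fun _ hp _ hq _ => by rw [hp, hq], fun _ hp _ hq _ => by rw [hp, hq], ?_⟩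
    rintro _ rfl a ha
    exact ⟨_, rfl, (nonpos_iff_eq_zero.mp ha).symm⟩
  obtain ⟨P, hP, hall⟩ := exists_of_finite_extensions hκ hι (fun _ => IsPartialMonoInj.sUnion)
    (R := Sum.elim (fun a P => a ∈ Prod.fst '' P) (fun W P => W ∈ Prod.snd '' P))
    (by rintro (a | W) P Q h <;> exact fun hx => image_mono h hx)
    (by rintro (a | W) P hP hPα
        exacts [hP.exists_finite_union_fst_mem hIci a hPα,
          hP.exists_finite_union_snd_mem W hPα])
    hP₀ ((mk_singleton _).trans_lt (one_lt_aleph0.trans_le hκ))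
  exact hP.exists_monotone_bijective (fun a => hall (.inl a)) fun W => hall (.inr W)

end PartialMonoInj

namespace Submodule

variable (K : Type u) (V : Type v) [DivisionRing K] [AddCommGroup V] [Module K V]

instance : IsDirectedOrder {W : Submodule K V // FiniteDimensional K W} :=
  ⟨fun a b => by
    have := a.2
    have := b.2
    exact ⟨⟨a.1 ⊔ b.1, inferInstance⟩, show a.1 ≤ _ from le_sup_left,
      show b.1 ≤ _ from le_sup_right⟩⟩

theorem infinite_finiteDimensional (hV : ¬ FiniteDimensional K V) :
    Infinite {W : Submodule K V // FiniteDimensional K W} := by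
  by_contra hfin
  rw [not_infinite_iff_finite] at hfin
  have (W : {W : Submodule K V // FiniteDimensional K W}) : FiniteDimensional K W.1 := W.2
  have htop : ⨆ W : {W : Submodule K V // FiniteDimensional K W}, W.1 = ⊤ :=
    eq_top_iff.mpr fun v _ => mem_iSup_of_mem ⟨K ∙ v, FiniteDimensional.span_singleton K v⟩
      (mem_span_singleton_self v)
  have := finiteDimensional_iSup fun W : {W : Submodule K V // FiniteDimensional K W} => W.1
  rw [htop] at this
  exact hV (Module.Finite.equiv topEquiv)

variable {K V}

theorem exists_injective_disjoint_range (hV : ¬ FiniteDimensional K V) (p : Submodule K V)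
    [FiniteDimensional K p] :
    ∃ φ : V →ₗ[K] V, Function.Injective φ ∧ Disjoint p (LinearMap.range φ) := by
  obtain ⟨q, hq⟩ := p.exists_isCompl
  have hrank : Module.rank K q = Module.rank K V := by
    refine eq_of_add_eq_of_aleph0_le ?_ ((Module.rank_lt_aleph0 K p).trans_le ?_) ?_
    · rw [← rank_prod', (prodEquivOfIsCompl p q hq).rank_eq]
    all_goals exact not_lt.mp fun h => hV (Module.rank_lt_aleph0_iff.mp h)
  let e := LinearEquiv.ofRankEq V q hrank.symm
  refine ⟨q.subtype ∘ₗ e.toLinearMap, q.injective_subtype.comp e.injective, ?_⟩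
  rw [LinearMap.range_comp, LinearEquiv.range, map_top, range_subtype]
  exact hq.disjoint

/-- `W ↦ S ⊔ φ W` is injective because, by modularity, `(S ⊔ φ W) ⊓ range φ = φ W`. -/
theorem mk_finiteDimensional_le_mk_Ici (hV : ¬ FiniteDimensional K V)
    (S : {W : Submodule K V // FiniteDimensional K W}) :
    #{W : Submodule K V // FiniteDimensional K W} ≤ #(Ici S) := by
  have := S.2
  obtain ⟨φ, hφ, hdisj⟩ := exists_injective_disjoint_range hV S.1
  have hsup (W : Submodule K V) : (S.1 ⊔ W.map φ) ⊓ LinearMap.range φ = W.map φ := by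
    rw [sup_comm, sup_inf_assoc_of_le _ (LinearMap.map_le_range), hdisj.eq_bot, sup_bot_eq]
  refine mk_le_of_injective (f := fun W => ⟨⟨S.1 ⊔ W.1.map φ, ?_⟩, show S.1 ≤ _ from le_sup_left⟩)
    fun W W' h => ?_
  · have := W.2
    infer_instance
  · have h' : S.1 ⊔ W.1.map φ = S.1 ⊔ W'.1.map φ := congrArg (fun X => X.1.1) h
    exact Subtype.ext (map_injective_of_injective hφ (by rw [← hsup, ← hsup W'.1, h']))

end Submodule

theorem free_commutative_monoid_structure_on_finite_dim_subspaces
    (K : Type u) (V : Type v) [Field K] [AddCommGroup V] [Module K V]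
    (hV : ¬ FiniteDimensional K V) :
    ∃ (star : {W : Submodule K V // FiniteDimensional K W} →
              {W : Submodule K V // FiniteDimensional K W} →
              {W : Submodule K V // FiniteDimensional K W})
      (zero : {W : Submodule K V // FiniteDimensional K W}),
      (∀ a b, star a b = star b a) ∧
      (∀ a b c, star (star a b) c = star a (star b c)) ∧
      (∀ a, star zero a = a) ∧
      (∃ (ι : Type v) (e : {W : Submodule K V // FiniteDimensional K W} ≃ (ι →₀ ℕ)),
        e zero = 0 ∧ ∀ a b, e (star a b) = e a + e b) ∧
      (∀ F G : {W : Submodule K V // FiniteDimensional K W},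
        (F : Submodule K V) ≤ (star F G : Submodule K V) ∧
        (G : Submodule K V) ≤ (star F G : Submodule K V)) := by
  let : OrderBot {W : Submodule K V // FiniteDimensional K W} := Subtype.orderBot inferInstance
  have := Submodule.infinite_finiteDimensional K V hV
  obtain ⟨f, hmono, hbij⟩ :=
    exists_monotone_bijective_finsupp (Submodule.mk_finiteDimensional_le_mk_Ici hV)
  let E := Equiv.ofBijective f hbij
  have hle (a b) : E a ≤ E (a + b) := hmono le_self_add
  refine ⟨fun F G => E (E.symm F + E.symm G), E 0, fun F G => congrArg E (add_comm _ _),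
    fun F G H => by simp only [Equiv.symm_apply_apply, add_assoc],
    fun F => by simp only [Equiv.symm_apply_apply, zero_add, Equiv.apply_symm_apply],
    ⟨_, E.symm, E.symm_apply_apply 0, fun F G => E.symm_apply_apply _⟩, fun F G => ⟨?_, ?_⟩⟩
  · simpa using hle (E.symm F) (E.symm G)
  · simpa [add_comm] using hle (E.symm G) (E.symm F)
end

section
/- Let V be a finite-dimensional vector space of dimension at least 2 over a field with at least 3 elements. Then there is no binary operation ∗ on the set of all subspaces of V making it a cancellative commutative monoid such that F, G ⊆ F ∗ G for all subspaces F, G. (Indeed, taking three distinct hyperplanes W₁, W₂, W₃ in V, any such operation would force W₁ ∗ W₃ = V = W₂ ∗ W₃, contradicting cancellativity.) -/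
/-!
Since `F ⊔ G ≤ F ∗ G`, the product of two distinct hyperplanes is the whole space. As soon as
`dim V ≥ 2` there are three distinct hyperplanes `W₁, W₂, W₃` (the kernels of `φ₁`, `φ₂` and
`φ₁ + φ₂` for two coordinate functionals), so `W₁ ∗ W₃ = ⊤ = W₂ ∗ W₃` and cancellation gives
`W₁ = W₂`.
-/

theorem IsCoatom.eq_of_cancel_of_le_op {α : Type*} [Lattice α] [OrderTop α] (op : α → α → α)
    (cancel : ∀ a b c, op a c = op b c → a = b) (le_op : ∀ a b, a ≤ op a b ∧ b ≤ op a b)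
    {a b c : α} (ha : IsCoatom a) (hb : IsCoatom b) (hc : IsCoatom c) (hac : a ≠ c)
    (hbc : b ≠ c) : a = b := by
  have op_eq_top {x : α} (hx : IsCoatom x) (hxc : x ≠ c) : op x c = ⊤ :=
    top_unique <| hx.sup_eq_top_of_ne hc hxc ▸ sup_le (le_op x c).1 (le_op x c).2
  exact cancel a b c ((op_eq_top ha hac).trans (op_eq_top hb hbc).symm)

section Hyperplanes

variable {K V : Type*} [Field K] [AddCommGroup V] [Module K V]

theorem LinearMap.isCoatom_ker_of_apply_eq_one {f : V →ₗ[K] K} {v : V} (hv : f v = 1) :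
    IsCoatom (LinearMap.ker f) :=
  LinearMap.isCoatom_ker_of_surjective fun c => ⟨c • v, by simp [hv]⟩

theorem LinearMap.ker_ne_ker_of_apply {f g : V →ₗ[K] K} {v : V} (hf : f v = 0) (hg : g v ≠ 0) :
    LinearMap.ker f ≠ LinearMap.ker g := fun h =>
  hg (LinearMap.mem_ker.1 (h ▸ LinearMap.mem_ker.2 hf))

theorem Submodule.exists_three_isCoatom (hdim : 2 ≤ Module.finrank K V) :
    ∃ W₁ W₂ W₃ : Submodule K V, IsCoatom W₁ ∧ IsCoatom W₂ ∧ IsCoatom W₃ ∧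
      W₁ ≠ W₂ ∧ W₁ ≠ W₃ ∧ W₂ ≠ W₃ := by
  have : Module.Finite K V := Module.finite_of_finrank_pos (by omega)
  let b := Module.finBasis K V
  let i₀ : Fin (Module.finrank K V) := ⟨0, by omega⟩
  let i₁ : Fin (Module.finrank K V) := ⟨1, hdim⟩
  have hne : i₀ ≠ i₁ := by simp [i₀, i₁, Fin.ext_iff]
  have h₀₀ : b.coord i₀ (b i₀) = 1 := by simp
  have h₀₁ : b.coord i₀ (b i₁) = 0 := by simp [Finsupp.single_eq_of_ne' hne.symm]
  have h₁₀ : b.coord i₁ (b i₀) = 0 := by simp [Finsupp.single_eq_of_ne' hne]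
  have h₁₁ : b.coord i₁ (b i₁) = 1 := by simp
  refine ⟨LinearMap.ker (b.coord i₀), LinearMap.ker (b.coord i₁),
    LinearMap.ker (b.coord i₀ + b.coord i₁),
    LinearMap.isCoatom_ker_of_apply_eq_one h₀₀, LinearMap.isCoatom_ker_of_apply_eq_one h₁₁,
    LinearMap.isCoatom_ker_of_apply_eq_one (v := b i₀) (by simp [h₀₀, h₁₀]),
    LinearMap.ker_ne_ker_of_apply h₀₁ (by simp [h₁₁]),
    LinearMap.ker_ne_ker_of_apply h₀₁ (by simp [h₀₁, h₁₁]),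
    LinearMap.ker_ne_ker_of_apply h₁₀ (by simp [h₀₀, h₁₀])⟩

end Hyperplanes

theorem no_cancellative_monoid_on_subspaces_of_finite_dim_general
    (K V : Type*) [Field K] [AddCommGroup V] [Module K V]
    (hdim : 2 ≤ Module.finrank K V) :
    ¬ ∃ star : Submodule K V → Submodule K V → Submodule K V,
        (∀ a b, star a b = star b a) ∧
        (∀ a b c, star (star a b) c = star a (star b c)) ∧
        (∃ e, ∀ a, star e a = a) ∧
        (∀ a b c, star a c = star b c → a = b) ∧
        (∀ F G : Submodule K V, F ≤ star F G ∧ G ≤ star F G) := by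
  rintro ⟨star, -, -, -, cancel, le_star⟩
  obtain ⟨W₁, W₂, W₃, h₁, h₂, h₃, h₁₂, h₁₃, h₂₃⟩ := Submodule.exists_three_isCoatom hdim
  exact h₁₂ (h₁.eq_of_cancel_of_le_op star cancel le_star h₂ h₃ h₁₃ h₂₃)

theorem no_cancellative_monoid_on_subspaces_of_finite_dim
    (K V : Type*) [Field K] [AddCommGroup V] [Module K V] [FiniteDimensional K V]
    (hdim : 2 ≤ Module.finrank K V)
    (hK : ∃ a b c : K, a ≠ b ∧ a ≠ c ∧ b ≠ c) :
    ¬ ∃ star : Submodule K V → Submodule K V → Submodule K V,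
        (∀ a b, star a b = star b a) ∧
        (∀ a b c, star (star a b) c = star a (star b c)) ∧
        (∃ e, ∀ a, star e a = a) ∧
        (∀ a b c, star a c = star b c → a = b) ∧
        (∀ F G : Submodule K V, F ≤ star F G ∧ G ≤ star F G) :=
  no_cancellative_monoid_on_subspaces_of_finite_dim_general K V hdim
end

section
/- Let X be a Banach space which is complemented in its bidual X** by a bounded projection P of norm at most λ, and let S be an amenable semigroup with scalar invariant mean m : ℓ∞(S) → ℝ of norm 1. Then the map M : ℓ∞(S,X) → X defined by M = κ_X⁻¹ ∘ P ∘ M̃, where ⟨M̃ f, φ⟩ = ⟨m, t ↦ ⟨φ, f(t)⟩⟩ for φ ∈ X*, is an X-valued invariant λ-mean on S. -/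
/-! For `f ∈ ℓ∞(S, X)`, the functional `φ ↦ m (t ↦ φ (f t))` is an element `M̃ f` of `X**` with
`‖M̃ f‖ ≤ ‖m‖ ‖f‖`; it inherits translation invariance from `m` and sends the constant `x` to `κ x`
because `m` is normalised. As `P` takes values in `κ(X)` and `κ` is an isometric embedding,
`κ⁻¹ ∘ P ∘ M̃` is a bounded linear map `ℓ∞(S, X) → X` of norm at most `‖P‖ ≤ λ`, and `P ∘ κ = κ`
transfers normalisation and invariance from `M̃` to it. -/

open scoped ENNReal

noncomputable section

def dualComp {S X : Type*} [NormedAddCommGroup X] [NormedSpace ℝ X]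
    (φ : X →L[ℝ] ℝ) (f : Linf S X) : Linf S ℝ :=
  ⟨fun t => φ (f t), memℓp_infty ⟨‖φ‖ * ‖f‖, by
    rintro - ⟨t, rfl⟩
    calc ‖φ (f t)‖ ≤ ‖φ‖ * ‖f t‖ := φ.le_opNorm _
    _ ≤ ‖φ‖ * ‖f‖ := by
        gcongr
        exact lp.norm_apply_le_norm (by simp) f t⟩⟩

section DualComp

variable {S X : Type*} [NormedAddCommGroup X] [NormedSpace ℝ X]

@[simp]
lemma dualComp_apply (φ : StrongDual ℝ X) (f : Linf S X) (t : S) :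
    dualComp φ f t = φ (f t) := rfl

lemma norm_dualComp_le (φ : StrongDual ℝ X) (f : Linf S X) : ‖dualComp φ f‖ ≤ ‖φ‖ * ‖f‖ :=
  lp.norm_le_of_forall_le (by positivity) fun t =>
    (φ.le_opNorm _).trans (by gcongr; exact lp.norm_apply_le_norm (by simp) f t)

lemma dualComp_linfConst (φ : StrongDual ℝ X) (x : X) :
    dualComp φ (linfConst S x) = linfConst S (φ x) := rfl

lemma dualComp_lTrans [Add S] (φ : StrongDual ℝ X) (s : S) (f : Linf S X) :
    dualComp φ (lTrans s f) = lTrans s (dualComp φ f) := rfl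

lemma dualComp_rTrans [Add S] (φ : StrongDual ℝ X) (s : S) (f : Linf S X) :
    dualComp φ (rTrans s f) = rTrans s (dualComp φ f) := rfl

end DualComp

section BidualMean

variable {S X : Type*} [NormedAddCommGroup X] [NormedSpace ℝ X]

lemma norm_apply_dualComp_le (m : Linf S ℝ →L[ℝ] ℝ) (f : Linf S X) (φ : StrongDual ℝ X) :
    ‖m (dualComp φ f)‖ ≤ ‖m‖ * ‖f‖ * ‖φ‖ :=
  (m.le_opNorm _).trans <| by
    rw [mul_assoc, mul_comm ‖f‖]; gcongr; exact norm_dualComp_le φ f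

def bidualMean (m : Linf S ℝ →L[ℝ] ℝ) : Linf S X →L[ℝ] StrongDual ℝ (StrongDual ℝ X) :=
  LinearMap.mkContinuous₂
    (LinearMap.mk₂ ℝ (fun f φ => m (dualComp φ f))
      (fun _ _ _ => by rw [← map_add]; congr 1; ext; simp)
      (fun _ _ _ => by rw [← map_smul]; congr 1; ext; simp)
      (fun _ _ _ => by rw [← map_add]; rfl)
      (fun _ _ _ => by rw [← map_smul]; rfl))
    ‖m‖ (norm_apply_dualComp_le m)

@[simp]
lemma bidualMean_apply (m : Linf S ℝ →L[ℝ] ℝ) (f : Linf S X) (φ : StrongDual ℝ X) :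
    bidualMean m f φ = m (dualComp φ f) := rfl

lemma norm_bidualMean_apply_le (m : Linf S ℝ →L[ℝ] ℝ) (f : Linf S X) :
    ‖bidualMean m f‖ ≤ ‖m‖ * ‖f‖ :=
  ContinuousLinearMap.opNorm_le_bound _ (by positivity) (norm_apply_dualComp_le m f)

lemma bidualMean_linfConst {m : Linf S ℝ →L[ℝ] ℝ} (hm : ∀ c, m (linfConst S c) = c) (x : X) :
    bidualMean m (linfConst S x) = NormedSpace.inclusionInDoubleDual ℝ X x := by
  ext φ
  rw [bidualMean_apply, dualComp_linfConst, hm, NormedSpace.dual_def]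

lemma bidualMean_lTrans [Add S] {m : Linf S ℝ →L[ℝ] ℝ} {s : S} (hm : ∀ g, m (lTrans s g) = m g)
    (f : Linf S X) : bidualMean m (lTrans s f) = bidualMean m f := by
  ext φ
  rw [bidualMean_apply, bidualMean_apply, dualComp_lTrans, hm]

lemma bidualMean_rTrans [Add S] {m : Linf S ℝ →L[ℝ] ℝ} {s : S} (hm : ∀ g, m (rTrans s g) = m g)
    (f : Linf S X) : bidualMean m (rTrans s f) = bidualMean m f := by
  ext φ
  rw [bidualMean_apply, bidualMean_apply, dualComp_rTrans, hm]

end BidualMean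

theorem LinearMap.exists_comp_eq_of_injective {R E F G : Type*} [Semiring R]
    [AddCommMonoid E] [Module R E] [AddCommMonoid F] [Module R F] [AddCommMonoid G] [Module R G]
    {ι : G →ₗ[R] F} (hι : Function.Injective ι) (T : E →ₗ[R] F) (hT : ∀ y, ∃ x, T y = ι x) :
    ∃ L : E →ₗ[R] G, ∀ y, ι (L y) = T y := by
  have hT_mem (y : E) : T y ∈ LinearMap.range ι := (hT y).imp fun _ hx => hx.symm
  refine ⟨(LinearEquiv.ofInjective ι hι).symm.toLinearMap ∘ₗ T.codRestrict _ hT_mem, fun y => ?_⟩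
  simp

theorem complemented_in_bidual_gives_invariant_mean_general
    {S X : Type*} [AddSemigroup S] [NormedAddCommGroup X] [NormedSpace ℝ X]
    (lam : ℝ)
    (P : StrongDual ℝ (StrongDual ℝ X) →L[ℝ]
         StrongDual ℝ (StrongDual ℝ X))
    (hPfix : ∀ x : X, P (NormedSpace.inclusionInDoubleDual ℝ X x) =
      NormedSpace.inclusionInDoubleDual ℝ X x)
    (hPrange : ∀ y, ∃ x : X, P y = NormedSpace.inclusionInDoubleDual ℝ X x)
    (hPnorm : @Norm.norm _ (ContinuousLinearMap.hasOpNorm (σ₁₂ := RingHom.id ℝ)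
      (E := StrongDual ℝ (StrongDual ℝ X)) (F := StrongDual ℝ (StrongDual ℝ X))) P ≤ lam)
    (m : Linf S ℝ →L[ℝ] ℝ) (hm : IsInvMean 1 m) :
    ∃ M : Linf S X →L[ℝ] X, IsInvMean lam M ∧
      ∀ (f : Linf S X) (y : StrongDual ℝ (StrongDual ℝ X)),
        (∀ φ : StrongDual ℝ X, y φ = m (dualComp φ f)) →
        NormedSpace.inclusionInDoubleDual ℝ X (M f) = P y := by
  obtain ⟨hm_norm, hm_const, hm_inv⟩ := hm
  have hκ : Function.Injective (NormedSpace.inclusionInDoubleDual ℝ X) :=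
    (NormedSpace.inclusionInDoubleDualLi ℝ).injective
  obtain ⟨L, hL⟩ := LinearMap.exists_comp_eq_of_injective hκ (P ∘L bidualMean m).toLinearMap
    fun f => hPrange (bidualMean m f)
  -- `_` rather than `P`: the operator norm must be the one fixed in `hPnorm`, since synthesizing
  -- a norm on `X** →L[ℝ] X**` fails.
  have hP : ∀ y, ‖P y‖ ≤ lam * ‖y‖ := ContinuousLinearMap.le_of_opNorm_le _ hPnorm
  have hlam : 0 ≤ lam := (ContinuousLinearMap.opNorm_nonneg _).trans hPnorm
  have hL_le (f : Linf S X) : ‖L f‖ ≤ lam * ‖f‖ :=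
    calc ‖L f‖ = ‖P (bidualMean m f)‖ := by
          rw [← (NormedSpace.inclusionInDoubleDualLi ℝ).norm_map]; exact congrArg norm (hL f)
      _ ≤ lam * (‖m‖ * ‖f‖) := (hP _).trans (by gcongr; exact norm_bidualMean_apply_le m f)
      _ ≤ lam * ‖f‖ := by gcongr; exact mul_le_of_le_one_left (norm_nonneg f) hm_norm
  let M : Linf S X →L[ℝ] X := L.mkContinuous lam hL_le
  have hM (f : Linf S X) : NormedSpace.inclusionInDoubleDual ℝ X (M f) = P (bidualMean m f) := hL f
  refine ⟨M, ⟨L.mkContinuous_norm_le hlam hL_le, fun x => hκ ?_, fun s f => ⟨hκ ?_, hκ ?_⟩⟩, ?_⟩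
  · rw [hM, bidualMean_linfConst hm_const, hPfix]
  · rw [hM, hM, bidualMean_lTrans fun g => (hm_inv s g).1]
  · rw [hM, hM, bidualMean_rTrans fun g => (hm_inv s g).2]
  · intro f y hy
    obtain rfl : y = bidualMean m f := ContinuousLinearMap.ext hy
    exact hM f

theorem complemented_in_bidual_gives_invariant_mean
    {S X : Type*} [AddSemigroup S] [NormedAddCommGroup X] [NormedSpace ℝ X]
    [CompleteSpace X] (lam : ℝ)
    (P : StrongDual ℝ (StrongDual ℝ X) →L[ℝ]
         StrongDual ℝ (StrongDual ℝ X))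
    (hPfix : ∀ x : X, P (NormedSpace.inclusionInDoubleDual ℝ X x) =
      NormedSpace.inclusionInDoubleDual ℝ X x)
    (hPrange : ∀ y, ∃ x : X, P y = NormedSpace.inclusionInDoubleDual ℝ X x)
    (hPnorm : @Norm.norm _ (ContinuousLinearMap.hasOpNorm (σ₁₂ := RingHom.id ℝ)
      (E := StrongDual ℝ (StrongDual ℝ X)) (F := StrongDual ℝ (StrongDual ℝ X))) P ≤ lam)
    (m : Linf S ℝ →L[ℝ] ℝ) (hm : IsInvMean 1 m) :
    ∃ M : Linf S X →L[ℝ] X, IsInvMean lam M ∧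
      ∀ (f : Linf S X) (y : StrongDual ℝ (StrongDual ℝ X)),
        (∀ φ : StrongDual ℝ X, y φ = m (dualComp φ f)) →
        NormedSpace.inclusionInDoubleDual ℝ X (M f) = P y :=
  complemented_in_bidual_gives_invariant_mean_general lam P hPfix hPrange hPnorm m hm
end
end

section
/- Let G be a group, X a Banach space, and M : ℓ∞(G,X) → X a bounded linear operator that is invariant under translations, i.e., M(f·s) = M(f) for all s ∈ G. If f₁, ..., fₙ ∈ ℓ∞(G,X) are translates of a single function f (fᵢ = f·gᵢ for some gᵢ ∈ G) and the fᵢ have pairwise disjoint supports, then ‖n·M(f)‖ = ‖M(f₁ + ⋯ + fₙ)‖ ≤ ‖M‖·‖f‖. Consequently, if f admits infinitely many pairwise-disjointly-supported translates f·g, f·g², f·g³, ..., then M(f) = 0. -/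
open scoped ENNReal

noncomputable section

/-!
Invariance turns `M (f·g₁ + ⋯ + f·gₙ)` into `n • M f`, while disjointness of the supports keeps
the sup norm of the sum at most `‖f‖`; hence `n ‖M f‖ ≤ ‖M‖ ‖f‖` for every `n`, which forces
`M f = 0` once there are arbitrarily many disjoint translates.
-/

theorem lp.norm_sum_le_of_pairwise_disjoint {S ι : Type*} {E : S → Type*}
    [∀ t, NormedAddCommGroup (E t)] (s : Finset ι) (F : ι → lp E ⊤)
    (hF : Pairwise fun i j => ∀ t, F i t = 0 ∨ F j t = 0) {C : ℝ} (hC : 0 ≤ C)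
    (hFC : ∀ i, ‖F i‖ ≤ C) : ‖∑ i ∈ s, F i‖ ≤ C := by
  refine lp.norm_le_of_forall_le hC fun t => ?_
  rw [lp.coeFn_sum, Finset.sum_apply]
  by_cases hsupp : ∃ i ∈ s, F i t ≠ 0
  · obtain ⟨i, hi, hFi⟩ := hsupp
    have hsingle : ∑ j ∈ s, F j t = F i t :=
      Finset.sum_eq_single_of_mem i hi fun j _ hji =>
        (hF hji t).resolve_right hFi
    rw [hsingle]
    exact (lp.norm_apply_le_norm ENNReal.top_ne_zero (F i) t).trans (hFC i)
  · push Not at hsupp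
    simpa [Finset.sum_eq_zero hsupp] using hC

section Translates

variable {G X : Type*} [Add G] [NormedAddCommGroup X]

theorem norm_rTrans_le (s : G) (f : Linf G X) : ‖rTrans s f‖ ≤ ‖f‖ :=
  lp.norm_le_of_forall_le (norm_nonneg f) fun t =>
    lp.norm_apply_le_norm ENNReal.top_ne_zero f (t + s)

theorem norm_sum_rTrans_le {n : ℕ} (f : Linf G X) (g : Fin n → G)
    (hdisj : Pairwise fun i j : Fin n => ∀ t : G, f (t + g i) = 0 ∨ f (t + g j) = 0) :
    ‖∑ i : Fin n, rTrans (g i) f‖ ≤ ‖f‖ :=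
  lp.norm_sum_le_of_pairwise_disjoint _ _ hdisj (norm_nonneg f) fun i => norm_rTrans_le (g i) f

variable [NormedSpace ℝ X] {M : Linf G X →L[ℝ] X}

theorem map_sum_rTrans_of_invariant (hM : ∀ (s : G) (f : Linf G X), M (rTrans s f) = M f)
    {n : ℕ} (f : Linf G X) (g : Fin n → G) :
    M (∑ i : Fin n, rTrans (g i) f) = (n : ℝ) • M f := by
  simp only [map_sum, hM, Finset.sum_const, Finset.card_fin, Nat.cast_smul_eq_nsmul]

theorem norm_natCast_smul_map_le_of_disjoint_translates
    (hM : ∀ (s : G) (f : Linf G X), M (rTrans s f) = M f) {n : ℕ} (f : Linf G X) (g : Fin n → G)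
    (hdisj : Pairwise fun i j : Fin n => ∀ t : G, f (t + g i) = 0 ∨ f (t + g j) = 0) :
    ‖(n : ℝ) • M f‖ ≤ ‖M‖ * ‖f‖ := by
  rw [← map_sum_rTrans_of_invariant hM f g]
  exact M.le_of_opNorm_le_of_le le_rfl (norm_sum_rTrans_le f g hdisj)

end Translates

theorem eq_zero_of_forall_natCast_mul_le {K : Type*} [Field K] [LinearOrder K]
    [IsStrictOrderedRing K] [Archimedean K] {a C : K} (ha : 0 ≤ a) (h : ∀ n : ℕ, n * a ≤ C) :
    a = 0 := by
  by_contra hne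
  have hpos : 0 < a := ha.lt_of_ne' hne
  obtain ⟨n, hn⟩ := exists_nat_gt (C / a)
  exact (h n).not_gt ((div_lt_iff₀ hpos).mp hn)

theorem disjoint_translates_force_mean_zero_general
    {G X : Type*} [AddGroup G] [NormedAddCommGroup X] [NormedSpace ℝ X]
    (M : Linf G X →L[ℝ] X)
    (hM : ∀ (s : G) (f : Linf G X), M (rTrans s f) = M f) :
    (∀ (n : ℕ) (f : Linf G X) (g : Fin n → G),
        (Pairwise fun i j : Fin n => ∀ t : G, f (t + g i) = 0 ∨ f (t + g j) = 0) →
        ‖(n : ℝ) • M f‖ = ‖M (∑ i : Fin n, rTrans (g i) f)‖ ∧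
        ‖(n : ℝ) • M f‖ ≤ ‖M‖ * ‖f‖) ∧
    (∀ (f : Linf G X) (g : G),
        (Pairwise fun i j : ℕ => ∀ t : G, f (t + (i + 1) • g) = 0 ∨ f (t + (j + 1) • g) = 0) →
        M f = 0) := by
  refine ⟨fun n f g hdisj => ⟨by rw [map_sum_rTrans_of_invariant hM],
    norm_natCast_smul_map_le_of_disjoint_translates hM f g hdisj⟩, fun f g hdisj => ?_⟩
  refine norm_eq_zero.mp <| eq_zero_of_forall_natCast_mul_le (C := ‖M‖ * ‖f‖) (norm_nonneg _)
    fun n => ?_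
  have hdisj_n : Pairwise fun i j : Fin n =>
      ∀ t : G, f (t + ((i : ℕ) + 1) • g) = 0 ∨ f (t + ((j : ℕ) + 1) • g) = 0 :=
    fun i j hij => hdisj (Fin.val_injective.ne hij)
  simpa only [norm_smul, Real.norm_natCast] using
    norm_natCast_smul_map_le_of_disjoint_translates hM f _ hdisj_n

theorem disjoint_translates_force_mean_zero
    {G X : Type*} [AddGroup G] [NormedAddCommGroup X] [NormedSpace ℝ X] [CompleteSpace X]
    (M : Linf G X →L[ℝ] X)
    (hM : ∀ (s : G) (f : Linf G X), M (rTrans s f) = M f) :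
    (∀ (n : ℕ) (f : Linf G X) (g : Fin n → G),
        (Pairwise fun i j : Fin n => ∀ t : G, f (t + g i) = 0 ∨ f (t + g j) = 0) →
        ‖(n : ℝ) • M f‖ = ‖M (∑ i : Fin n, rTrans (g i) f)‖ ∧
        ‖(n : ℝ) • M f‖ ≤ ‖M‖ * ‖f‖) ∧
    (∀ (f : Linf G X) (g : G),
        (Pairwise fun i j : ℕ => ∀ t : G, f (t + (i + 1) • g) = 0 ∨ f (t + (j + 1) • g) = 0) →
        M f = 0) :=
  disjoint_translates_force_mean_zero_general M hM

end
end
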